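/- The symmetric simple exclusion process is self-dual: with the duality function $D(\xi,\eta) = \prod_{x : \xi(x)=1} \eta(x)$ (an indicator that every particle site of $\xi$ is occupied in $\eta$), one has $\mathcal{L}_N D(\xi,\cdot)(\eta) = \mathcal{L}_{N,\kappa} D(\cdot,\eta)(\xi)$ for every $\kappa$-particle configuration $\xi$ and every configuration $\eta$, where $\mathcal{L}_N$ acts on the $\eta$-variable and $\mathcal{L}_{N,\kappa}$ (the SSEP generator restricted to $\kappa$-particle configurations) acts on the $\xi$-variable. -/
import Mathlib


open scoped Classical

/-- Exchange of the occupation values of a configuration at sites `x` and `y`. -/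
noncomputable def ssepSwap {V : Type*} [DecidableEq V] (η : V → Bool) (x y : V) : V → Bool :=
  fun w => if w = x then η y else if w = y then η x else η w

/-- Occupation number of a site, as a real number. -/
noncomputable def occ : Bool → ℝ := fun b => if b then 1 else 0

/-- The SSEP generator on the discrete torus `𝕋^d_N = (ZMod N)^d`. This same formula
defines the generator `ℒ_{N,κ}` when restricted to `κ`-particle configurations, since the
dynamics preserves the particle number. -/
noncomputable def ssepGen (d N : ℕ) [NeZero N] (p : (Fin d → ZMod N) → ℝ)
    (f : ((Fin d → ZMod N) → Bool) → ℝ) (η : (Fin d → ZMod N) → Bool) : ℝ :=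
  (N : ℝ) ^ 2 * ∑ x, ∑ z, occ (η x) * (1 - occ (η (x + z))) * p z *
    (f (ssepSwap η x (x + z)) - f η)

/-- The duality function `D(ξ,η) = ∏_{x : ξ(x)=1} η(x)`. -/
noncomputable def dualityD (d N : ℕ) [NeZero N]
    (ξ η : (Fin d → ZMod N) → Bool) : ℝ :=
  ∏ x, if ξ x then occ (η x) else 1

lemma ssepSwap_self {V : Type*} [DecidableEq V] (η : V → Bool) (x : V) :
    ssepSwap η x x = η := by
  funext w
  by_cases h : w = x <;> simp [ssepSwap, h]

lemma ssepSwap_comm {V : Type*} [DecidableEq V] (η : V → Bool) (x y : V) :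
    ssepSwap η x y = ssepSwap η y x := by
  by_cases hxy : x = y
  · subst hxy; rfl
  · funext w
    by_cases hx : w = x <;> by_cases hy : w = y <;> simp_all [ssepSwap]

lemma dualityD_eq (d N : ℕ) [NeZero N] (ξ η : (Fin d → ZMod N) → Bool)
    (x y : Fin d → ZMod N) (hxy : x ≠ y) :
    dualityD d N ξ η = (if ξ x then occ (η x) else 1) *
      ((if ξ y then occ (η y) else 1) *
        ∏ w ∈ (Finset.univ.erase x).erase y, (if ξ w then occ (η w) else 1)) := by
  have hy : y ∈ Finset.univ.erase x := Finset.mem_erase.mpr ⟨Ne.symm hxy, Finset.mem_univ y⟩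
  rw [dualityD, ← Finset.mul_prod_erase _ _ (Finset.mem_univ x),
    ← Finset.mul_prod_erase _ _ hy]

lemma pair_key (d N : ℕ) [NeZero N] (ξ η : (Fin d → ZMod N) → Bool)
    (x y : Fin d → ZMod N) :
    occ (η x) * (1 - occ (η y)) * (dualityD d N ξ (ssepSwap η x y) - dualityD d N ξ η)
      + occ (η y) * (1 - occ (η x)) * (dualityD d N ξ (ssepSwap η y x) - dualityD d N ξ η)
    = occ (ξ x) * (1 - occ (ξ y)) * (dualityD d N (ssepSwap ξ x y) η - dualityD d N ξ η)
      + occ (ξ y) * (1 - occ (ξ x)) * (dualityD d N (ssepSwap ξ y x) η - dualityD d N ξ η) := by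
  by_cases hxy : x = y
  · subst hxy; simp [ssepSwap_self]
  · have hyx : y ≠ x := Ne.symm hxy
    rw [ssepSwap_comm η y x, ssepSwap_comm ξ y x]
    set R : ℝ := ∏ w ∈ (Finset.univ.erase x).erase y, (if ξ w then occ (η w) else 1) with hRdef
    have hswx : ssepSwap η x y x = η y := by simp [ssepSwap]
    have hswy : ssepSwap η x y y = η x := by simp [ssepSwap, hyx]
    have hsxx : ssepSwap ξ x y x = ξ y := by simp [ssepSwap]
    have hsxy : ssepSwap ξ x y y = ξ x := by simp [ssepSwap, hyx]
    have e0 : dualityD d N ξ η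
        = (if ξ x then occ (η x) else 1) * ((if ξ y then occ (η y) else 1) * R) :=
      dualityD_eq d N ξ η x y hxy
    have e1 : dualityD d N ξ (ssepSwap η x y)
        = (if ξ x then occ (η y) else 1) * ((if ξ y then occ (η x) else 1) * R) := by
      rw [dualityD_eq d N ξ (ssepSwap η x y) x y hxy, hswx, hswy]
      congr 2
      apply Finset.prod_congr rfl
      intro w hw
      simp only [Finset.mem_erase] at hw
      simp [ssepSwap, hw.1, hw.2.1]
    have e2 : dualityD d N (ssepSwap ξ x y) η
        = (if ξ y then occ (η x) else 1) * ((if ξ x then occ (η y) else 1) * R) := by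
      rw [dualityD_eq d N (ssepSwap ξ x y) η x y hxy, hsxx, hsxy]
      congr 2
      apply Finset.prod_congr rfl
      intro w hw
      simp only [Finset.mem_erase] at hw
      simp [ssepSwap, hw.1, hw.2.1]
    rw [e0, e1, e2]
    cases hb1 : ξ x <;> cases hb2 : ξ y <;> cases hb3 : η x <;> cases hb4 : η y <;>
      simp [occ, hb1, hb2, hb3, hb4] <;> ring

lemma sum_sym {d N : ℕ} [NeZero N] (p : (Fin d → ZMod N) → ℝ)
    (hp' : ∀ z, p (-z) = p z) (c : (Fin d → ZMod N) → (Fin d → ZMod N) → ℝ) :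
    (∑ x, ∑ z, p z * c x (x + z)) = ∑ x, ∑ z, p z * c (x + z) x := by
  rw [Finset.sum_comm]
  conv_rhs => rw [Finset.sum_comm]
  have step1 : ∀ z : Fin d → ZMod N,
      (∑ x, p z * c (x + z) x) = ∑ x, p z * c x (x - z) := by
    intro z
    refine Fintype.sum_equiv (Equiv.addRight z) _ _ ?_
    intro x
    simp
  rw [Finset.sum_congr rfl (fun z _ => step1 z)]
  refine (Fintype.sum_equiv (Equiv.neg _) _ _ ?_).symm
  intro z
  simp only [Equiv.neg_apply, hp', sub_eq_add_neg]

/-- Self-duality of the SSEP: `ℒ_N D(ξ,·)(η) = ℒ_{N,κ} D(·,η)(ξ)` for every `κ`-particle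
configuration `ξ` and every configuration `η`, with nearest-neighbour symmetric kernel. -/
theorem stmt3 (d N : ℕ) [NeZero N] (p : (Fin d → ZMod N) → ℝ)
    (hp : ∀ z, p z = if (∃ j : Fin d, z = Pi.single j 1 ∨ z = -Pi.single j 1)
      then 1 / (2 * (d : ℝ)) else 0)
    (κ : ℕ) (ξ η : (Fin d → ZMod N) → Bool)
    (hκ : (∑ x, occ (ξ x)) = (κ : ℝ)) :
    ssepGen d N p (fun η' => dualityD d N ξ η') η
      = ssepGen d N p (fun ξ' => dualityD d N ξ' η) ξ := by
  have hp' : ∀ z, p (-z) = p z := by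
    intro z
    rw [hp, hp]
    refine if_congr ?_ rfl rfl
    constructor
    · rintro ⟨j, h | h⟩
      · exact ⟨j, Or.inr (by rw [neg_eq_iff_eq_neg] at h; exact h)⟩
      · exact ⟨j, Or.inl (by rwa [neg_eq_iff_eq_neg, neg_neg] at h)⟩
    · rintro ⟨j, h | h⟩
      · exact ⟨j, Or.inr (by rw [h])⟩
      · exact ⟨j, Or.inl (by rw [h, neg_neg])⟩
  set cη : (Fin d → ZMod N) → (Fin d → ZMod N) → ℝ := fun x y =>
    occ (η x) * (1 - occ (η y)) * (dualityD d N ξ (ssepSwap η x y) - dualityD d N ξ η)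
    with hcη
  set cξ : (Fin d → ZMod N) → (Fin d → ZMod N) → ℝ := fun x y =>
    occ (ξ x) * (1 - occ (ξ y)) * (dualityD d N (ssepSwap ξ x y) η - dualityD d N ξ η)
    with hcξ
  have key : (∑ x, ∑ z, p z * cη x (x + z)) = ∑ x, ∑ z, p z * cξ x (x + z) := by
    have h1 := sum_sym p hp' cη
    have h2 := sum_sym p hp' cξ
    have h3 : (∑ x, ∑ z, (p z * cη x (x + z) + p z * cη (x + z) x))
        = ∑ x, ∑ z, (p z * cξ x (x + z) + p z * cξ (x + z) x) := by
      refine Finset.sum_congr rfl fun x _ => Finset.sum_congr rfl fun z _ => ?_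
      rw [← mul_add, ← mul_add]
      have := pair_key d N ξ η x (x + z)
      simp only [hcη, hcξ]
      rw [this]
    simp only [Finset.sum_add_distrib] at h3
    linarith
  simp only [ssepGen]
  congr 1
  calc (∑ x, ∑ z, occ (η x) * (1 - occ (η (x + z))) * p z *
        (dualityD d N ξ (ssepSwap η x (x + z)) - dualityD d N ξ η))
      = ∑ x, ∑ z, p z * cη x (x + z) := by
        refine Finset.sum_congr rfl fun x _ => Finset.sum_congr rfl fun z _ => ?_
        simp only [hcη]; ring
    _ = ∑ x, ∑ z, p z * cξ x (x + z) := key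
    _ = ∑ x, ∑ z, occ (ξ x) * (1 - occ (ξ (x + z))) * p z *
        (dualityD d N (ssepSwap ξ x (x + z)) η - dualityD d N ξ η) := by
        refine Finset.sum_congr rfl fun x _ => Finset.sum_congr rfl fun z _ => ?_
        simp only [hcξ]; ring
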